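/- For every even integer n ≥ 18, the circulant graph Circ(n, {3, 4, 5, 8}) is a nut graph. -/

import Mathlib

open Finset Polynomial

/-- The circulant graph `Circ(n, S)` on the vertex set `Fin n` (identified with `ℤ/nℤ`):
distinct vertices `i` and `j` are adjacent iff `i - j ≡ ±s (mod n)` for some `s ∈ S`. -/
def circ (n : ℕ) (S : Finset ℕ) : SimpleGraph (Fin n) where
  Adj i j := i ≠ j ∧ ∃ s ∈ S,
      ((i.val : ZMod n) - (j.val : ZMod n) = (s : ZMod n) ∨
        (j.val : ZMod n) - (i.val : ZMod n) = (s : ZMod n))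
  symm := by
    constructor
    rintro i j ⟨hij, s, hs, h⟩
    exact ⟨hij.symm, s, hs, h.symm⟩
  loopless := by
    constructor
    rintro i ⟨h, -⟩
    exact h rfl

open Classical in
/-- The adjacency matrix (over `ℚ`) of a graph on `Fin n`. -/
noncomputable def adjMat {n : ℕ} (G : SimpleGraph (Fin n)) :
    Matrix (Fin n) (Fin n) ℚ :=
  Matrix.of fun i j => if G.Adj i j then 1 else 0

/-- A graph on at least two vertices is a nut graph if the kernel of its rational
adjacency matrix is one-dimensional, spanned by a vector having no zero entries. -/
def IsNutGraph {n : ℕ} (G : SimpleGraph (Fin n)) : Prop :=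
  2 ≤ n ∧ ∃ v : Fin n → ℚ, (∀ i, v i ≠ 0) ∧ (adjMat G).mulVec v = 0 ∧
    ∀ w : Fin n → ℚ, (adjMat G).mulVec w = 0 → ∃ c : ℚ, w = c • v

open Classical in
/-- The degree of a vertex of a graph on `Fin n`. -/
noncomputable def degOf {n : ℕ} (G : SimpleGraph (Fin n)) (v : Fin n) : ℕ :=
  (Finset.univ.filter fun w => G.Adj v w).card

/-- A graph is `d`-regular if every vertex has degree `d`. -/
def IsRegularGraph {n : ℕ} (G : SimpleGraph (Fin n)) (d : ℕ) : Prop :=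
  ∀ v, degOf G v = d

/-- The eigenvalue polynomial `P(y) = ∑_{k=1}^{n-1} a_k y^k`, where `a_k = 1` iff
`k ∈ S` or `n - k ∈ S`. -/
noncomputable def Pval (n : ℕ) (S : Finset ℕ) (y : ℂ) : ℂ :=
  ∑ k ∈ Finset.Ico 1 n, (if k ∈ S ∨ n - k ∈ S then (1 : ℂ) else 0) * y ^ k

/-- `ω = e^{2πi/n}`. -/
noncomputable def omegaC (n : ℕ) : ℂ :=
  Complex.exp (2 * (Real.pi : ℂ) * Complex.I / (n : ℂ))

/-- The generator set `S_t = {1, …, 2t+1} \ {t}`. -/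
def St (t : ℕ) : Finset ℕ := (Finset.Icc 1 (2 * t + 1)).erase t

/-- The polynomial `Q_t(y) = y^{4t+3} − y^{3t+2} + y^{3t+1} − y^{2t+2} + y^{2t+1}
− y^{t+2} + y^{t+1} − 1` over `ℤ`. -/
noncomputable def Qt (t : ℕ) : Polynomial ℤ :=
  X ^ (4 * t + 3) - X ^ (3 * t + 2) + X ^ (3 * t + 1) - X ^ (2 * t + 2)
    + X ^ (2 * t + 1) - X ^ (t + 2) + X ^ (t + 1) - 1

/-!
The adjacency matrix of `Circ(n, S)` acts on `ℂ^(ℤ/nℤ)` as a convolution, so the discrete Fourier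
transform diagonalises it: the character `z ↦ ω^(jz)` is an eigenvector with eigenvalue
`P(ω^j)`, where `P = Pval n S`. If `P(ω^j)` vanishes exactly at `j = n/2`, the kernel is spanned by
the character of frequency `n/2`, which is the alternating vector `((-1)^i)`: rational and without
zero entries, so the graph is a nut graph.

For `S = {3, 4, 5, 8}` and `y^n = 1` we have
`y^8 P(y) = y^16 + y^13 + y^12 + y^11 + y^5 + y^4 + y^3 + 1`. If a root of unity `y` of order `d`
is a root of this polynomial, its minimal polynomial `Φ_d` divides it, hence `φ(d) ≤ 16`. This
leaves finitely many orders, all dividing one of ten exponents `D`, and for each of them a Bézout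
identity with `y^D - 1` shows that `y = -1`, i.e. `j = n/2`.
-/

open ZMod

theorem Nat.le_totient_sq_of_odd {m : ℕ} (hm : Odd m) : m ≤ m.totient ^ 2 := by
  induction m using Nat.recOnPosPrimePosCoprime with
  | prime_pow p k hp hk =>
    have hp3 : 3 ≤ p := by
      have := hp.two_le
      have : p ≠ 2 := by rintro rfl; exact absurd ((Nat.odd_pow_iff hk.ne').mp hm) (by decide)
      omega
    rw [Nat.totient_prime_pow hp hk]
    have hp_sq : p ≤ (p - 1) ^ 2 := by zify [hp.one_le]; nlinarith
    calc p ^ k = p ^ (k - 1) * p := by rw [← pow_succ, Nat.sub_add_cancel hk]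
      _ ≤ p ^ (2 * (k - 1)) * (p - 1) ^ 2 :=
        Nat.mul_le_mul (Nat.pow_le_pow_right hp.pos (by omega)) hp_sq
      _ = (p ^ (k - 1) * (p - 1)) ^ 2 := by ring
  | zero => simp at hm
  | one => simp
  | coprime a b _ _ hab iha ihb =>
    rw [Nat.totient_mul hab, mul_pow]
    exact Nat.mul_le_mul (iha (Nat.odd_mul.mp hm).1) (ihb (Nat.odd_mul.mp hm).2)

theorem Nat.le_two_mul_totient_sq (d : ℕ) : d ≤ 2 * d.totient ^ 2 := by
  rcases Nat.eq_zero_or_pos d with rfl | hd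
  · simp
  obtain ⟨k, m, hm, rfl⟩ := Nat.exists_eq_two_pow_mul_odd hd.ne'
  rw [Nat.totient_mul ((Nat.coprime_two_left.mpr hm).pow_left k), mul_pow]
  have hm_le := Nat.le_totient_sq_of_odd hm
  rcases Nat.eq_zero_or_pos k with rfl | hk
  · simp only [pow_zero, one_mul, Nat.totient_one, one_pow]
    omega
  · have h2 : 2 ^ k ≤ 2 * Nat.totient (2 ^ k) ^ 2 := by
      rw [Nat.totient_prime_pow Nat.prime_two hk, Nat.add_one_sub_one, mul_one, ← pow_mul,
        ← pow_succ']
      exact Nat.pow_le_pow_right two_pos (by omega)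
    calc 2 ^ k * m ≤ 2 * Nat.totient (2 ^ k) ^ 2 * m.totient ^ 2 := Nat.mul_le_mul h2 hm_le
      _ = _ := by ring

section Polynomial3458

/-- `x ^ 8 · ∑_{s ∈ {±3, ±4, ±5, ±8}} x ^ s`. -/
noncomputable def circ3458Poly : ℚ[X] :=
  X ^ 16 + X ^ 13 + X ^ 12 + X ^ 11 + X ^ 5 + X ^ 4 + X ^ 3 + 1

lemma natDegree_circ3458Poly : circ3458Poly.natDegree = 16 := by
  unfold circ3458Poly
  compute_degree!

lemma circ3458Poly_ne_zero : circ3458Poly ≠ 0 := by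
  intro h
  simpa [h] using natDegree_circ3458Poly

lemma aeval_circ3458Poly (x : ℂ) :
    aeval x circ3458Poly = x ^ 16 + x ^ 13 + x ^ 12 + x ^ 11 + x ^ 5 + x ^ 4 + x ^ 3 + 1 := by
  simp [circ3458Poly]

def maximalTotientLeSixteen : Finset ℕ := {22, 26, 28, 32, 34, 36, 40, 42, 48, 60}

lemma exists_dvd_maximalTotientLeSixteen : ∀ d < 513, 0 < d → d.totient ≤ 16 →
    ∃ D ∈ maximalTotientLeSixteen, d ∣ D := by
  decide +kernel

-- Each case is a Bézout identity `a · circ3458Poly + b · (x ^ D - 1) = x + 1` in `ℚ[x]`.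
lemma eq_neg_one_of_pow_eq_one_of_mem_maximalTotientLeSixteen {x : ℂ} {D : ℕ}
    (hD : D ∈ maximalTotientLeSixteen) (h : x ^ D = 1) (hp : aeval x circ3458Poly = 0) :
    x = -1 := by
  rw [aeval_circ3458Poly] at hp
  simp only [maximalTotientLeSixteen, mem_insert, mem_singleton] at hD
  rcases hD with rfl | rfl | rfl | rfl | rfl | rfl | rfl | rfl | rfl | rfl
  · linear_combination (-551 + 420 * x - 1587 * x ^ 2 + 224 * x ^ 3 - 1567 * x ^ 4 + 204 * x ^ 5
        - 1371 * x ^ 6 + 1240 * x ^ 7 - 1791 * x ^ 8 + 824 * x ^ 9 - 11 * x ^ 10 + 1596 * x ^ 11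
        + 53 * x ^ 12 + 916 * x ^ 13 - 499 * x ^ 14 + 1292 * x ^ 15 - 875 * x ^ 16 + 1844 * x ^ 17
        - 195 * x ^ 18 + 1780 * x ^ 19 - 967 * x ^ 20) / 3916 * hp
      + (-4467 - 3496 * x - 1587 * x ^ 2 - 327 * x ^ 3 - 1698 * x ^ 4 - 1514 * x ^ 5 - 2314 * x ^ 6
        - 1690 * x ^ 7 - 2930 * x ^ 8 - 1910 * x ^ 9 + 62 * x ^ 10 - 877 * x ^ 11 + 195 * x ^ 12
        - 1780 * x ^ 13 + 967 * x ^ 14) / 3916 * h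
  · linear_combination (-1985 + 5920 * x - 4993 * x ^ 2 - 1316 * x ^ 3 - 97 * x ^ 4 - 24 * x ^ 5
        - 3417 * x ^ 6 + 3296 * x ^ 7 - 4709 * x ^ 8 - 1600 * x ^ 9 + 2527 * x ^ 10 + 1408 * x ^ 11
        - 3393 * x ^ 12 + 3896 * x ^ 13 - 2449 * x ^ 14 + 5864 * x ^ 15 + 1511 * x ^ 16
        - 436 * x ^ 17 - 2173 * x ^ 18 + 1220 * x ^ 19 - 3829 * x ^ 20 + 4904 * x ^ 21
        + 2471 * x ^ 22 + 944 * x ^ 23 + 503 * x ^ 24) / 16172 * hp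
      + (-18157 - 10252 * x - 4993 * x ^ 2 - 3301 * x ^ 3 + 3838 * x ^ 4 - 1082 * x ^ 5
        - 3806 * x ^ 6 - 3110 * x ^ 7 - 6146 * x ^ 8 - 5138 * x ^ 9 + 2382 * x ^ 10 - 5407 * x ^ 11
        - 2471 * x ^ 12 - 944 * x ^ 13 - 503 * x ^ 14) / 16172 * h
  · linear_combination (3349 - 2974 * x - 285 * x ^ 2 + 3320 * x ^ 3 - 1539 * x ^ 4 - 5702 * x ^ 5
        + 3507 * x ^ 6 + 2104 * x ^ 7 - 4299 * x ^ 8 - 2942 * x ^ 9 + 4723 * x ^ 10 - 1688 * x ^ 11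
        - 1571 * x ^ 12 + 1946 * x ^ 13 + 1403 * x ^ 14 - 2960 * x ^ 15 + 1885 * x ^ 16
        + 4930 * x ^ 17 - 13 * x ^ 18 - 4960 * x ^ 19 + 2821 * x ^ 20 + 1418 * x ^ 21
        - 3557 * x ^ 22 - 1416 * x ^ 23 + 6333 * x ^ 24 + 482 * x ^ 25
        - 1557 * x ^ 26) / 11032 * hp
      + (-7683 - 14006 * x - 285 * x ^ 2 + 6669 * x ^ 3 - 1164 * x ^ 4 - 5612 * x ^ 5
        + 3568 * x ^ 6 + 3600 * x ^ 7 - 8220 * x ^ 8 - 6676 * x ^ 9 + 4632 * x ^ 10 + 2973 * x ^ 11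
        - 6333 * x ^ 12 - 482 * x ^ 13 + 1557 * x ^ 14) / 11032 * h
  · linear_combination (-11 + 26 * x - 5 * x ^ 2 - 12 * x ^ 3 + 17 * x ^ 4 - 10 * x ^ 5
        - 17 * x ^ 6 + 32 * x ^ 7 - 27 * x ^ 8 - 22 * x ^ 9 + 27 * x ^ 10 - 12 * x ^ 11
        - 15 * x ^ 12 + 22 * x ^ 13 - 17 * x ^ 14 + 21 * x ^ 16 - 6 * x ^ 17 - 5 * x ^ 18
        + 20 * x ^ 19 - 15 * x ^ 20 + 22 * x ^ 21 + 15 * x ^ 22 - 32 * x ^ 23 + 5 * x ^ 24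
        + 10 * x ^ 25 - 37 * x ^ 26 + 20 * x ^ 27 + 17 * x ^ 28 - 10 * x ^ 29
        + 15 * x ^ 30) / 64 * hp
      + (-75 - 38 * x - 5 * x ^ 2 - 23 * x ^ 3 + 32 * x ^ 4 - 8 * x ^ 6 + 32 * x ^ 7 - 32 * x ^ 8
        - 32 * x ^ 9 + 32 * x ^ 10 - 35 * x ^ 11 - 17 * x ^ 12 + 10 * x ^ 13
        - 15 * x ^ 14) / 64 * h
  · linear_combination (-54 + 40 * x + 8 * x ^ 2 + 46 * x ^ 3 - 49 * x ^ 4 + x ^ 5 - 38 * x ^ 6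
        + 75 * x ^ 7 - 27 * x ^ 8 - 4 * x ^ 9 - 67 * x ^ 10 + 36 * x ^ 11 + 12 * x ^ 12
        + 25 * x ^ 13 - 62 * x ^ 14 + 14 * x ^ 15 - 17 * x ^ 16 + 71 * x ^ 17 - 23 * x ^ 18
        + 9 * x ^ 19 - 63 * x ^ 20 + 66 * x ^ 21 + 16 * x ^ 22 + 21 * x ^ 23 - 58 * x ^ 24
        + 10 * x ^ 25 - 13 * x ^ 26 + 50 * x ^ 27 - 53 * x ^ 28 + 5 * x ^ 29 - 42 * x ^ 30
        + 79 * x ^ 31 + 3 * x ^ 32) / 68 * hp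
      + (-122 - 28 * x + 8 * x ^ 2 - 8 * x ^ 3 - 63 * x ^ 4 - 5 * x ^ 5 + 56 * x ^ 6 + 80 * x ^ 7
        - 29 * x ^ 8 - 90 * x ^ 9 - 29 * x ^ 10 - 8 * x ^ 11 + 42 * x ^ 12 - 79 * x ^ 13
        - 3 * x ^ 14) / 68 * h
  · linear_combination (16049 + 27482 * x - 12225 * x ^ 2 + 19648 * x ^ 3 + 73 * x ^ 4
        - 1182 * x ^ 5 + 12407 * x ^ 6 - 9376 * x ^ 7 - 12303 * x ^ 8 - 17174 * x ^ 9
        - 3929 * x ^ 10 + 1200 * x ^ 11 - 22303 * x ^ 12 - 7174 * x ^ 13 - 14505 * x ^ 14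
        + 17536 * x ^ 15 - 6311 * x ^ 16 + 5202 * x ^ 17 + 14519 * x ^ 18 - 7096 * x ^ 19
        + 22353 * x ^ 20 + 21178 * x ^ 21 - 5129 * x ^ 22 + 4632 * x ^ 23 + 4145 * x ^ 24
        + 22754 * x ^ 25 - 12609 * x ^ 26 - 1568 * x ^ 27 - 25655 * x ^ 28 - 20526 * x ^ 29
        - 6697 * x ^ 30 - 7480 * x ^ 31 + 17625 * x ^ 32 + 9274 * x ^ 33
        - 497 * x ^ 34) / 89352 * hp
      + (-73303 - 61870 * x - 12225 * x ^ 2 + 35697 * x ^ 3 + 43604 * x ^ 4 + 30124 * x ^ 5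
        + 47312 * x ^ 6 - 1880 * x ^ 7 + 6236 * x ^ 8 - 5876 * x ^ 9 - 2080 * x ^ 10
        + 7977 * x ^ 11 - 17625 * x ^ 12 - 9274 * x ^ 13 + 497 * x ^ 14) / 89352 * h
  · linear_combination (-20053 + 686 * x - 39299 * x ^ 2 - 10308 * x ^ 3 - 27465 * x ^ 4
        + 298 * x ^ 5 - 21511 * x ^ 6 + 8784 * x ^ 7 - 15077 * x ^ 8 + 19950 * x ^ 9
        + 8637 * x ^ 10 + 31036 * x ^ 11 + 3271 * x ^ 12 + 28762 * x ^ 13 + 5545 * x ^ 14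
        + 34128 * x ^ 15 - 5541 * x ^ 16 + 10414 * x ^ 17 - 16707 * x ^ 18 + 3980 * x ^ 19
        - 25193 * x ^ 20 - 1974 * x ^ 21 - 35799 * x ^ 22 - 13808 * x ^ 23 - 24805 * x ^ 24
        + 5438 * x ^ 25 - 25491 * x ^ 26 + 9244 * x ^ 27 - 9097 * x ^ 28 + 27930 * x ^ 29
        + 7577 * x ^ 30 + 29136 * x ^ 31 + 651 * x ^ 32 + 26142 * x ^ 33 + 3645 * x ^ 34
        + 33068 * x ^ 35 + 2439 * x ^ 36 + 16394 * x ^ 37 - 16247 * x ^ 38) / 35120 * hp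
      + (-55173 - 34434 * x - 39299 * x ^ 2 - 30361 * x ^ 3 - 46832 * x ^ 4 - 58368 * x ^ 5
        - 70432 * x ^ 6 - 68288 * x ^ 7 - 52552 * x ^ 8 - 28728 * x ^ 9 - 3792 * x ^ 10
        - 16821 * x ^ 11 - 2439 * x ^ 12 - 16394 * x ^ 13 + 16247 * x ^ 14) / 35120 * h
  · linear_combination (85291 - 153152 * x - 249429 * x ^ 2 + 159812 * x ^ 3 - 291577 * x ^ 4
        - 265164 * x ^ 5 + 48391 * x ^ 6 + 172036 * x ^ 7 - 346809 * x ^ 8 - 11188 * x ^ 9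
        + 231551 * x ^ 10 + 122856 * x ^ 11 - 48905 * x ^ 12 + 239428 * x ^ 13 + 114831 * x ^ 14
        + 75692 * x ^ 15 - 1741 * x ^ 16 + 356148 * x ^ 17 - 135785 * x ^ 18 - 222212 * x ^ 19
        + 47439 * x ^ 20 + 172988 * x ^ 21 - 389761 * x ^ 22 - 166980 * x ^ 23 + 35215 * x ^ 24
        - 124832 * x ^ 25 - 277749 * x ^ 26 + 209888 * x ^ 27 - 124597 * x ^ 28 - 90684 * x ^ 29
        + 79711 * x ^ 30 + 427324 * x ^ 31 + 8919 * x ^ 32 - 51244 * x ^ 33 + 103187 * x ^ 34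
        + 227784 * x ^ 35 - 175841 * x ^ 36 + 133516 * x ^ 37 + 302727 * x ^ 38 + 204308 * x ^ 39
        - 215281 * x ^ 40) / 864444 * hp
      + (-779153 - 1017596 * x - 249429 * x ^ 2 + 245103 * x ^ 3 - 359438 * x ^ 4 - 582454 * x ^ 5
        - 194378 * x ^ 6 - 209158 * x ^ 7 - 743738 * x ^ 8 - 519538 * x ^ 9 + 186814 * x ^ 10
        + 81765 * x ^ 11 - 302727 * x ^ 12 - 204308 * x ^ 13 + 215281 * x ^ 14) / 864444 * h
  · linear_combination (-27013 + 41174 * x - 24027 * x ^ 2 + 21532 * x ^ 3 - 28481 * x ^ 4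
        + 6906 * x ^ 5 - 18943 * x ^ 6 + 19712 * x ^ 7 - 14421 * x ^ 8 - 1466 * x ^ 9
        - 31931 * x ^ 10 + 32508 * x ^ 11 - 7297 * x ^ 12 + 16730 * x ^ 13 - 35487 * x ^ 14
        + 37696 * x ^ 15 - 14885 * x ^ 16 + 25398 * x ^ 17 - 2587 * x ^ 18 + 4796 * x ^ 19
        - 23553 * x ^ 20 + 32986 * x ^ 21 - 7775 * x ^ 22 + 8352 * x ^ 23 - 41749 * x ^ 24
        + 25862 * x ^ 25 - 20571 * x ^ 26 + 21340 * x ^ 27 - 33377 * x ^ 28 + 11802 * x ^ 29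
        - 18751 * x ^ 30 + 16256 * x ^ 31 + 891 * x ^ 32 + 13270 * x ^ 33 - 40283 * x ^ 34
        + 37980 * x ^ 35 + 671 * x ^ 36 + 29594 * x ^ 37 - 29823 * x ^ 38 + 25888 * x ^ 39
        - 26261 * x ^ 40 + 14022 * x ^ 41 - 14395 * x ^ 42 + 10460 * x ^ 43 - 10689 * x ^ 44
        + 40954 * x ^ 45 - 2303 * x ^ 46) / 82848 * hp
      + (-109861 - 41674 * x - 24027 * x ^ 2 - 5481 * x ^ 3 - 14320 * x ^ 4 - 2960 * x ^ 5
        + 19736 * x ^ 6 - 11264 * x ^ 7 - 14464 * x ^ 8 - 41984 * x ^ 9 - 24256 * x ^ 10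
        - 8157 * x ^ 11 + 10689 * x ^ 12 - 40954 * x ^ 13 + 2303 * x ^ 14) / 82848 * h
  · linear_combination (-770707 + 93554 * x - 1843221 * x ^ 2 - 198632 * x ^ 3 - 1303475 * x ^ 4
        - 233478 * x ^ 5 - 683749 * x ^ 6 + 305216 * x ^ 7 - 734403 * x ^ 8 + 663850 * x ^ 9
        + 472123 * x ^ 10 + 1378704 * x ^ 11 - 6331 * x ^ 12 + 1352258 * x ^ 13 + 183195 * x ^ 14
        + 1500832 * x ^ 15 - 218339 * x ^ 16 + 598026 * x ^ 17 - 581053 * x ^ 18 - 154120 * x ^ 19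
        - 811707 * x ^ 20 + 33274 * x ^ 21 - 1693781 * x ^ 22 - 602832 * x ^ 23 - 1057675 * x ^ 24
        + 279242 * x ^ 25 - 1245069 * x ^ 26 + 509896 * x ^ 27 - 492923 * x ^ 28 + 872610 * x ^ 29
        + 409883 * x ^ 30 + 1274144 * x ^ 31 + 261309 * x ^ 32 + 1084618 * x ^ 33 + 287755 * x ^ 34
        + 1563072 * x ^ 35 - 427099 * x ^ 36 + 356546 * x ^ 37 - 785733 * x ^ 38 + 407200 * x ^ 39
        - 1324427 * x ^ 40 - 212526 * x ^ 41 - 1289581 * x ^ 42 - 752272 * x ^ 43 - 997395 * x ^ 44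
        + 320242 * x ^ 45 - 1090949 * x ^ 46 + 341376 * x ^ 47 - 324403 * x ^ 48 + 1539770 * x ^ 49
        + 163563 * x ^ 50 + 1213864 * x ^ 51 + 109 * x ^ 52 + 1091058 * x ^ 53 + 122915 * x ^ 54
        + 1254512 * x ^ 55 + 448821 * x ^ 56 + 766546 * x ^ 57 - 749573 * x ^ 58) / 2258520 * hp
      + (-3029227 - 2164966 * x - 1843221 * x ^ 2 - 969339 * x ^ 3 - 1980628 * x ^ 4
        - 2753852 * x ^ 5 - 2632048 * x ^ 6 - 3040112 * x ^ 7 - 2469988 * x ^ 8 - 1556852 * x ^ 9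
        - 139888 * x ^ 10 - 504939 * x ^ 11 - 448821 * x ^ 12 - 766546 * x ^ 13
        + 749573 * x ^ 14) / 2258520 * h

lemma eq_neg_one_of_aeval_circ3458Poly_eq_zero {x : ℂ} {m : ℕ} (hm : 0 < m) (hx : x ^ m = 1)
    (hp : aeval x circ3458Poly = 0) : x = -1 := by
  set d := orderOf x
  have hd : 0 < d := (isOfFinOrder_iff_pow_eq_one.mpr ⟨m, hm, hx⟩).orderOf_pos
  have hdvd : cyclotomic d ℚ ∣ circ3458Poly := by
    rw [cyclotomic_eq_minpoly_rat (IsPrimitiveRoot.orderOf x) hd]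
    exact minpoly.dvd ℚ x hp
  have htot : d.totient ≤ 16 := by
    simpa [natDegree_cyclotomic, natDegree_circ3458Poly] using
      natDegree_le_of_dvd hdvd circ3458Poly_ne_zero
  have hd_lt : d < 513 := by nlinarith [Nat.le_two_mul_totient_sq d]
  obtain ⟨D, hD, hdD⟩ := exists_dvd_maximalTotientLeSixteen d hd_lt hd htot
  exact eq_neg_one_of_pow_eq_one_of_mem_maximalTotientLeSixteen hD
    (orderOf_dvd_iff_pow_eq_one.mp hdD) hp

end Polynomial3458

section Circulant

def circConn (n : ℕ) (S : Finset ℕ) : Finset ℕ := {k ∈ Ico 1 n | k ∈ S ∨ n - k ∈ S}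

lemma Pval_eq_sum_circConn (n : ℕ) (S : Finset ℕ) (y : ℂ) :
    Pval n S y = ∑ k ∈ circConn n S, y ^ k := by
  simp only [Pval, circConn, sum_filter, ite_mul, one_mul, zero_mul]

lemma lt_of_mem_circConn {n k : ℕ} {S : Finset ℕ} (hk : k ∈ circConn n S) : k < n :=
  (mem_Ico.mp (mem_filter.mp hk).1).2

variable {n : ℕ} [NeZero n] {S : Finset ℕ}

lemma val_finEquiv_symm (z : ZMod n) : ((ZMod.finEquiv n).symm z : ℕ) = z.val := by
  obtain ⟨m, rfl⟩ : ∃ m, n = m + 1 := ⟨n - 1, (Nat.succ_pred_eq_of_pos (NeZero.pos n)).symm⟩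
  rfl

lemma natCast_finEquiv_symm (z : ZMod n) : (((ZMod.finEquiv n).symm z : ℕ) : ZMod n) = z := by
  rw [val_finEquiv_symm, ZMod.natCast_zmod_val]

lemma ZMod.eq_natCast_iff_val_eq {s : ℕ} (hs : s < n) (z : ZMod n) : z = s ↔ z.val = s := by
  constructor
  · rintro rfl
    exact ZMod.val_cast_of_lt hs
  · intro h
    rw [← h, ZMod.natCast_zmod_val]

lemma circ_adj_finEquiv_symm_iff (hS : ∀ s ∈ S, s < n) (x z : ZMod n) :
    (circ n S).Adj ((ZMod.finEquiv n).symm x) ((ZMod.finEquiv n).symm (x + z)) ↔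
      z.val ∈ circConn n S := by
  simp only [circ, natCast_finEquiv_symm, ne_eq, (ZMod.finEquiv n).symm.injective.eq_iff,
    left_eq_add, sub_add_cancel_left, add_sub_cancel_left, circConn, mem_filter, mem_Ico]
  rcases eq_or_ne z 0 with rfl | hz
  · simp
  have hz_val : z.val ≠ 0 := (ZMod.val_ne_zero z).mpr hz
  have hz_lt : z.val < n := ZMod.val_lt z
  have hneg : (-z).val = n - z.val := by rw [ZMod.neg_val, if_neg hz]
  simp only [hz, not_false_eq_true, true_and]
  constructor
  · rintro ⟨s, hs, h | h⟩
    · rw [eq_natCast_iff_val_eq (hS s hs), hneg] at h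
      exact ⟨⟨by omega, hz_lt⟩, Or.inr (h ▸ hs)⟩
    · rw [eq_natCast_iff_val_eq (hS s hs)] at h
      exact ⟨⟨by omega, hz_lt⟩, Or.inl (h ▸ hs)⟩
  · rintro ⟨-, h | h⟩
    · exact ⟨z.val, h, Or.inr (ZMod.natCast_zmod_val z).symm⟩
    · exact ⟨n - z.val, h, Or.inl (by rw [eq_natCast_iff_val_eq (by omega), hneg])⟩

lemma adjMat_circ_mulVec_finEquiv_symm (hS : ∀ s ∈ S, s < n) (w : Fin n → ℚ) (x : ZMod n) :
    (adjMat (circ n S)).mulVec w ((ZMod.finEquiv n).symm x) =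
      ∑ k ∈ circConn n S, w ((ZMod.finEquiv n).symm (x + k)) := by
  simp only [Matrix.mulVec, dotProduct, adjMat, Matrix.of_apply, ite_mul, one_mul, zero_mul]
  rw [← ((Equiv.addLeft x).trans (ZMod.finEquiv n).symm.toEquiv).sum_comp]
  simp only [Equiv.trans_apply, Equiv.coe_addLeft, RingEquiv.toEquiv_eq_coe,
    RingEquiv.coe_toEquiv, circ_adj_finEquiv_symm_iff hS, ← sum_filter]
  refine sum_nbij' ZMod.val Nat.cast (fun z hz => (mem_filter.mp hz).2)
    (fun k hk => mem_filter.mpr ⟨mem_univ _, ?_⟩) (fun z _ => ZMod.natCast_zmod_val z)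
    (fun k hk => ZMod.val_cast_of_lt (lt_of_mem_circConn hk))
    (fun z _ => by rw [ZMod.natCast_zmod_val])
  rwa [ZMod.val_cast_of_lt (lt_of_mem_circConn hk)]

lemma adjMat_circ_mulVec_eq_zero_iff (hS : ∀ s ∈ S, s < n) (w : Fin n → ℚ) :
    (adjMat (circ n S)).mulVec w = 0 ↔
      ∀ x : ZMod n, ∑ k ∈ circConn n S, (w ((ZMod.finEquiv n).symm (x + k)) : ℂ) = 0 := by
  rw [funext_iff, (ZMod.finEquiv n).symm.surjective.forall]
  refine forall_congr' fun x => ?_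
  rw [adjMat_circ_mulVec_finEquiv_symm hS, Pi.zero_apply, ← Rat.cast_sum, Rat.cast_eq_zero]

end Circulant

section Fourier

variable {n : ℕ} [NeZero n] {T : Finset ℕ} {W : ZMod n → ℂ}

lemma ZMod.dft_comp_add_right (W : ZMod n → ℂ) (a k : ZMod n) :
    𝓕 (fun z => W (z + a)) k = stdAddChar (a * k) * 𝓕 W k := by
  simp only [dft_apply, smul_eq_mul, mul_sum]
  refine Fintype.sum_equiv (Equiv.addRight a) _ _ fun z => ?_
  rw [Equiv.coe_addRight, ← mul_assoc, ← AddChar.map_add_eq_mul]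
  ring_nf

lemma ZMod.dft_eq_zero_of_sum_comp_add_eq_zero
    (hW : ∀ x, ∑ k ∈ T, W (x + (k : ZMod n)) = 0) (j : ZMod n)
    (hj : ∑ k ∈ T, stdAddChar j ^ k ≠ 0) : 𝓕 W j = 0 := by
  have h : 𝓕 (fun x => ∑ k ∈ T, W (x + (k : ZMod n))) j =
      (∑ k ∈ T, stdAddChar j ^ k) * 𝓕 W j := by
    rw [← Finset.sum_fn, map_sum, Finset.sum_apply, sum_mul]
    refine sum_congr rfl fun k _ => ?_
    rw [dft_comp_add_right, ← nsmul_eq_mul, AddChar.map_nsmul_eq_pow]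
  rw [funext hW, show (fun _ : ZMod n => (0 : ℂ)) = 0 from rfl, map_zero, Pi.zero_apply] at h
  exact (mul_eq_zero.mp h.symm).resolve_left hj

lemma ZMod.exists_eq_mul_stdAddChar_of_sum_comp_add_eq_zero
    (hW : ∀ x, ∑ k ∈ T, W (x + (k : ZMod n)) = 0) (j₀ : ZMod n)
    (hj₀ : ∀ j ≠ j₀, ∑ k ∈ T, stdAddChar j ^ k ≠ 0) :
    ∃ c : ℂ, ∀ z, W z = c * stdAddChar (j₀ * z) := by
  refine ⟨(n : ℂ)⁻¹ * 𝓕 W j₀, fun z => ?_⟩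
  rw [← congrFun ((dft (N := n) (E := ℂ)).symm_apply_apply W) z, invDFT_apply,
    sum_eq_single j₀ (fun j _ hj => by rw [dft_eq_zero_of_sum_comp_add_eq_zero hW j (hj₀ j hj),
      smul_zero]) (by simp), smul_eq_mul, smul_eq_mul]
  ring

lemma ZMod.sum_stdAddChar_mul_add (T : Finset ℕ) (j x : ZMod n) :
    ∑ k ∈ T, stdAddChar (j * (x + (k : ZMod n))) =
      stdAddChar (j * x) * ∑ k ∈ T, stdAddChar j ^ k := by
  rw [mul_sum]
  refine sum_congr rfl fun k _ => ?_
  rw [mul_add, AddChar.map_add_eq_mul, mul_comm j (k : ZMod n), ← nsmul_eq_mul,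
    AddChar.map_nsmul_eq_pow]

lemma ZMod.stdAddChar_natCast_half (hn : Even n) : stdAddChar ((n / 2 : ℕ) : ZMod n) = -1 := by
  set ξ := stdAddChar ((n / 2 : ℕ) : ZMod n)
  have hsq : ξ ^ 2 = 1 := by
    rw [← AddChar.map_nsmul_eq_pow, two_nsmul, ← Nat.cast_add, ← two_mul,
      Nat.mul_div_cancel' (even_iff_two_dvd.mp hn), ZMod.natCast_self, AddChar.map_zero_eq_one]
  have hne : ξ ≠ 1 := by
    rw [← AddChar.map_zero_eq_one (stdAddChar (N := n)), Ne, injective_stdAddChar.eq_iff,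
      ZMod.natCast_eq_zero_iff]
    obtain ⟨r, hr⟩ := hn
    have := NeZero.pos n
    exact fun hdvd => absurd (Nat.le_of_dvd (by omega) hdvd) (by omega)
  have : (ξ - 1) * (ξ + 1) = 0 := by linear_combination hsq
  exact eq_neg_of_add_eq_zero_left ((mul_eq_zero.mp this).resolve_left (sub_ne_zero.mpr hne))

lemma ZMod.stdAddChar_natCast_half_mul (hn : Even n) (z : ZMod n) :
    stdAddChar (((n / 2 : ℕ) : ZMod n) * z) = (-1 : ℂ) ^ z.val := by
  conv_lhs => rw [← ZMod.natCast_zmod_val z, mul_comm, ← nsmul_eq_mul]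
  rw [AddChar.map_nsmul_eq_pow, stdAddChar_natCast_half hn]

end Fourier

theorem isNutGraph_circ_of_Pval_eq_zero_iff {n : ℕ} [NeZero n] {S : Finset ℕ} (hn : Even n)
    (hS : ∀ s ∈ S, s < n)
    (hP : ∀ j : ZMod n, Pval n S (stdAddChar j) = 0 ↔ j = ((n / 2 : ℕ) : ZMod n)) :
    IsNutGraph (circ n S) := by
  set e := ZMod.finEquiv n
  set h : ZMod n := ((n / 2 : ℕ) : ZMod n)
  have hP' : ∀ j, ∑ k ∈ circConn n S, stdAddChar j ^ k = 0 ↔ j = h := by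
    simpa only [Pval_eq_sum_circConn] using hP
  have hker : ∀ w : Fin n → ℚ, (adjMat (circ n S)).mulVec w = 0 →
      ∀ z, (w (e.symm z) : ℂ) = w (e.symm 0) * (-1) ^ z.val := by
    intro w hw
    obtain ⟨c, hc⟩ := exists_eq_mul_stdAddChar_of_sum_comp_add_eq_zero
      (W := fun z => (w (e.symm z) : ℂ)) ((adjMat_circ_mulVec_eq_zero_iff hS w).mp hw) h
      fun j hj => (hP' j).not.mpr hj
    intro z
    rw [hc z, hc 0, mul_zero, AddChar.map_zero_eq_one, mul_one, stdAddChar_natCast_half_mul hn]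
  refine ⟨?_, fun i => (-1) ^ (i : ℕ), fun i => by simp, ?_, fun w hw => ⟨w (e.symm 0), ?_⟩⟩
  · obtain ⟨r, hr⟩ := hn
    have := NeZero.pos n
    omega
  · rw [adjMat_circ_mulVec_eq_zero_iff hS]
    intro x
    simp only [Rat.cast_pow, Rat.cast_neg, Rat.cast_one, val_finEquiv_symm,
      ← stdAddChar_natCast_half_mul hn]
    rw [sum_stdAddChar_mul_add, (hP' h).mpr rfl, mul_zero]
  · funext i
    have hi := hker w hw (e i)
    rw [RingEquiv.symm_apply_apply, ← val_finEquiv_symm, RingEquiv.symm_apply_apply] at hi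
    simp only [Pi.smul_apply, smul_eq_mul]
    exact_mod_cast hi

lemma circConn_3458 {n : ℕ} (hn : 17 ≤ n) :
    circConn n {3, 4, 5, 8} = {3, 4, 5, 8, n - 8, n - 5, n - 4, n - 3} := by
  ext k
  simp only [circConn, mem_filter, mem_Ico, mem_insert, mem_singleton]
  omega

lemma pow_eight_mul_Pval_3458 {n : ℕ} (hn : 17 ≤ n) {ξ : ℂ} (hξ : ξ ^ n = 1) :
    ξ ^ 8 * Pval n {3, 4, 5, 8} ξ = aeval ξ circ3458Poly := by
  rw [Pval_eq_sum_circConn, circConn_3458 hn, aeval_circ3458Poly]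
  obtain ⟨m, rfl⟩ : ∃ m, n = m + 8 := ⟨n - 8, by omega⟩
  rw [sum_insert (by simp; omega), sum_insert (by simp; omega), sum_insert (by simp; omega),
    sum_insert (by simp; omega), sum_insert (by simp), sum_insert (by simp), sum_insert (by simp),
    sum_singleton, show m + 8 - 8 = m by omega, show m + 8 - 5 = m + 3 by omega,
    show m + 8 - 4 = m + 4 by omega, show m + 8 - 3 = m + 5 by omega]
  linear_combination (1 + ξ ^ 3 + ξ ^ 4 + ξ ^ 5) * hξ

lemma Pval_3458_stdAddChar_eq_zero_iff {n : ℕ} [NeZero n] (hn : 18 ≤ n) (hn_even : Even n)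
    (j : ZMod n) : Pval n {3, 4, 5, 8} (stdAddChar j) = 0 ↔ j = ((n / 2 : ℕ) : ZMod n) := by
  have hξ : stdAddChar j ^ n = 1 := by
    rw [← AddChar.map_nsmul_eq_pow, nsmul_eq_mul, ZMod.natCast_self, zero_mul,
      AddChar.map_zero_eq_one]
  have key := pow_eight_mul_Pval_3458 (by omega) hξ
  constructor
  · intro h
    rw [h, mul_zero, eq_comm] at key
    exact injective_stdAddChar ((eq_neg_one_of_aeval_circ3458Poly_eq_zero (NeZero.pos n) hξ
      key).trans (stdAddChar_natCast_half hn_even).symm)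
  · rintro rfl
    rw [stdAddChar_natCast_half hn_even] at key ⊢
    rw [aeval_circ3458Poly] at key
    linear_combination key

/-- For every even `n ≥ 18`, the circulant graph
`Circ(n, {3, 4, 5, 8})` is a nut graph. -/
theorem circulant_nut_3458
    (n : ℕ) (hn : 18 ≤ n) (hneven : Even n) :
    IsNutGraph (circ n ({3, 4, 5, 8} : Finset ℕ)) := by
  have : NeZero n := ⟨by omega⟩
  exact isNutGraph_circ_of_Pval_eq_zero_iff hneven (by simp; omega)
    (Pval_3458_stdAddChar_eq_zero_iff hn hneven)
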